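/- With the notation of the previous construction: if a ≥ 1 and b ≤ 1 are constants such that ρ(z_{m₁}, z_m)^a ≤ ρ(z_{m,j}, z_{m₁,j₁}) ≤ ρ(z_{m₁}, z_m)^b for all m ≠ m₁ and all j, j₁, then (δ(ζ))^{aN} · N r^{N−1} (1−r²)/(1−r^{2N}) ≤ δ(ζ') ≤ (δ(ζ))^{bN} · N r^{N−1} (1−r²)/(1−r^{2N}). -/

import Mathlib

open Metric

/-- The pseudohyperbolic metric on the unit disk. -/
noncomputable def pRho (z w : ℂ) : ℝ :=
  ‖(z - w) / (1 - (starRingEnd ℂ) w * z)‖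

/-- The interpolation characteristic `δ(ζ) = inf_k ∏_{j≠k} ρ(z_j, z_k)` of a sequence. -/
noncomputable def charSeq {ι : Type*} (z : ι → ℂ) : ℝ :=
  ⨅ k : ι, ∏' j : {j : ι // j ≠ k}, pRho (z j) (z k)

/-!
Möbius invariance of `ρ` moves the cluster around `z_m` to the circle `|z| = r`, where its
points are `r ω₀ ξ` with `ξ` running over the `N`-th roots of unity. There
`ρ(r α, r β) = r |1 - β/α| / |r² - β/α|`, and `∏_{ξ ≠ 1} (x - ξ) = 1 + x + ⋯ + x^{N-1}`
evaluated at `x = 1` and `x = r²` gives the intra-cluster product `N r^{N-1} (1-r²)/(1-r^{2N})`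
at every point. The remaining factors at `z_{m,j}` come `N` per cluster `m₁ ≠ m`, each between
`ρ(z_{m₁}, z_m)^a` and `ρ(z_{m₁}, z_m)^b`, so they multiply to a number between `p_m^{aN}` and
`p_m^{bN}`, where `p_m = ∏_{m₁ ≠ m} ρ(z_{m₁}, z_m) ≥ δ(ζ)`; taking infima over the points gives
the two bounds.
-/

open ComplexConjugate Finset Polynomial

lemma pRho_nonneg (z w : ℂ) : 0 ≤ pRho z w := norm_nonneg _

lemma pRho_symm (z w : ℂ) : pRho z w = pRho w z := by
  rw [pRho, pRho, norm_div, norm_div, norm_sub_rev, ← Complex.norm_conj (1 - conj w * z)]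
  simp [mul_comm]

lemma pRho_le_one {z w : ℂ} (hz : ‖z‖ ≤ 1) (hw : ‖w‖ ≤ 1) : pRho z w ≤ 1 := by
  rw [pRho, norm_div]
  refine div_le_one_of_le₀ ?_ (norm_nonneg _)
  have key : Complex.normSq (1 - conj w * z) - Complex.normSq (z - w)
      = (1 - Complex.normSq z) * (1 - Complex.normSq w) := by
    simp only [Complex.normSq_apply, Complex.mul_re, Complex.mul_im, Complex.sub_re,
      Complex.sub_im, Complex.one_re, Complex.one_im, Complex.conj_re, Complex.conj_im]
    ring
  have hz2 : Complex.normSq z ≤ 1 := by rw [Complex.normSq_eq_norm_sq]; nlinarith [norm_nonneg z]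
  have hw2 : Complex.normSq w ≤ 1 := by rw [Complex.normSq_eq_norm_sq]; nlinarith [norm_nonneg w]
  rw [← sq_le_sq₀ (norm_nonneg _) (norm_nonneg _), ← Complex.normSq_eq_norm_sq,
    ← Complex.normSq_eq_norm_sq]
  nlinarith

lemma pRho_moebius {c u v : ℂ} (hc : ‖c‖ < 1) (hu : ‖u‖ ≤ 1) (hv : ‖v‖ ≤ 1) :
    pRho ((u + c) / (1 + conj c * u)) ((v + c) / (1 + conj c * v)) = pRho u v := by
  have hD : ∀ {x : ℂ}, ‖x‖ ≤ 1 → 1 + conj c * x ≠ 0 := fun {x} hx h => by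
    have : ‖conj c * x‖ < 1 := by
      rw [norm_mul, Complex.norm_conj]; nlinarith [norm_nonneg c, norm_nonneg x]
    rw [eq_neg_of_add_eq_zero_right h, norm_neg, norm_one] at this
    exact lt_irrefl _ this
  have hDu := hD hu
  have hDv := hD hv
  have hDv' : 1 + c * conj v ≠ 0 := by
    simpa [mul_comm] using (map_ne_zero (starRingEnd ℂ)).2 hDv
  have hcc : 1 - conj c * c ≠ 0 := by
    rw [sub_ne_zero, ← Complex.normSq_eq_conj_mul_self, ne_comm, ← Complex.ofReal_one,
      Ne, Complex.ofReal_inj, Complex.normSq_eq_norm_sq]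
    nlinarith [norm_nonneg c]
  have hnum : (u + c) / (1 + conj c * u) - (v + c) / (1 + conj c * v)
      = (u - v) * ((1 - conj c * c) / ((1 + conj c * u) * (1 + conj c * v))) := by
    rw [div_sub_div _ _ hDu hDv, mul_div_assoc']
    congr 1; ring
  have hden : 1 - conj ((v + c) / (1 + conj c * v)) * ((u + c) / (1 + conj c * u))
      = (1 - conj v * u) * ((1 - conj c * c) / ((1 + c * conj v) * (1 + conj c * u))) := by
    simp only [map_div₀, map_add, map_mul, map_one, Complex.conj_conj]
    rw [div_mul_div_comm, one_sub_div (mul_ne_zero hDv' hDu), mul_div_assoc']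
    congr 1; ring
  have hK : ‖(1 - conj c * c) / ((1 + c * conj v) * (1 + conj c * u))‖
      = ‖(1 - conj c * c) / ((1 + conj c * u) * (1 + conj c * v))‖ := by
    rw [norm_div, norm_div, norm_mul, norm_mul, mul_comm, ← Complex.norm_conj (1 + c * conj v)]
    simp [mul_comm]
  have hK0 : ‖(1 - conj c * c) / ((1 + conj c * u) * (1 + conj c * v))‖ ≠ 0 :=
    norm_ne_zero_iff.2 (div_ne_zero hcc (mul_ne_zero hDu hDv))
  rw [pRho, pRho, norm_div, norm_div, hnum, hden, norm_mul, norm_mul, hK,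
    mul_div_mul_right _ _ hK0]

lemma norm_moebius_le_one {c u : ℂ} (hc : ‖c‖ < 1) (hu : ‖u‖ ≤ 1) :
    ‖(u + c) / (1 + conj c * u)‖ ≤ 1 := by
  have hnc : ‖-c‖ ≤ 1 := by rw [norm_neg]; exact hc.le
  calc ‖(u + c) / (1 + conj c * u)‖
      = pRho ((u + c) / (1 + conj c * u)) ((-c + c) / (1 + conj c * -c)) := by simp [pRho]
    _ = pRho u (-c) := pRho_moebius hc hu hnc
    _ ≤ 1 := pRho_le_one hu hnc

namespace IsPrimitiveRoot

lemma prod_erase_one_sub_eq_geom_sum {R : Type*} [CommRing R] [IsDomain R] [DecidableEq R]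
    {μ : R} {N : ℕ} (hμ : IsPrimitiveRoot μ N) (hN : 0 < N) (x : R) :
    ∏ ξ ∈ (nthRootsFinset N (1 : R)).erase 1, (x - ξ) = ∑ i ∈ range N, x ^ i := by
  have h := X_pow_sub_one_eq_prod hN hμ
  rw [← mul_prod_erase _ _ (one_mem_nthRootsFinset hN), ← mul_geom_sum, C_1] at h
  have := congrArg (eval x) (mul_left_cancel₀ (X_sub_C_ne_zero 1) h)
  simpa [eval_prod, eval_geom_sum] using this.symm

lemma prod_erase_pow_div_pow {K M : Type*} [Field K] [DecidableEq K] [CommMonoid M]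
    {μ : K} {N : ℕ} [NeZero N] (hμ : IsPrimitiveRoot μ N) (f : K → M) (j : Fin N) :
    ∏ j₁ ∈ univ.erase j, f (μ ^ (j : ℕ) / μ ^ (j₁ : ℕ))
      = ∏ ξ ∈ (nthRootsFinset N (1 : K)).erase 1, f ξ := by
  have hN : 0 < N := Nat.pos_of_neZero N
  have hμ0 : ∀ k : ℕ, μ ^ k ≠ 0 := fun k => pow_ne_zero k (hμ.ne_zero hN.ne')
  have hinj : ∀ a b : Fin N, μ ^ (j : ℕ) / μ ^ (a : ℕ) = μ ^ (j : ℕ) / μ ^ (b : ℕ) → a = b :=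
    fun a b h => Fin.ext <| hμ.pow_inj a.2 b.2 (by simpa [div_eq_mul_inv, hμ0] using h)
  refine prod_nbij (fun j₁ => μ ^ (j : ℕ) / μ ^ (j₁ : ℕ)) (fun j₁ hj₁ => ?_)
    (fun a _ b _ h => hinj a b h) (fun ξ hξ => ?_) (fun _ _ => rfl)
  · refine mem_erase.2 ⟨fun h => (mem_erase.1 hj₁).1 (hinj _ _ (h.trans (div_self (hμ0 _)).symm)),
      (Polynomial.mem_nthRootsFinset hN 1).2 ?_⟩
    rw [div_pow, pow_right_comm μ (j : ℕ), pow_right_comm μ (j₁ : ℕ), hμ.pow_eq_one, one_pow,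
      one_pow, div_one]
  · obtain ⟨hξ1, hξ⟩ := mem_erase.1 hξ
    obtain ⟨i, hi, hμi⟩ := hμ.eq_pow_of_pow_eq_one (ξ := μ ^ (j : ℕ) / ξ) (by
      rw [div_pow, pow_right_comm μ (j : ℕ), hμ.pow_eq_one, one_pow,
        (Polynomial.mem_nthRootsFinset hN 1).1 hξ, div_one])
    have hval : μ ^ (j : ℕ) / μ ^ i = ξ := by rw [hμi, div_div_cancel₀ (hμ0 _)]
    refine ⟨⟨i, hi⟩, mem_erase.2 ⟨fun h => hξ1 ?_, mem_univ _⟩, hval⟩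
    rw [← hval, ← h, div_self (hμ0 _)]

end IsPrimitiveRoot

lemma pRho_ofReal_mul_of_norm_eq_one {r : ℝ} (hr : 0 ≤ r) {α β : ℂ} (hα : ‖α‖ = 1) (hβ : ‖β‖ = 1) :
    pRho (r * α) (r * β) = r * ‖1 - β / α‖ / ‖(r : ℂ) ^ 2 - β / α‖ := by
  have hα0 : α ≠ 0 := norm_ne_zero_iff.1 (by rw [hα]; exact one_ne_zero)
  have hββ : conj β * β = 1 := by
    rw [← Complex.normSq_eq_conj_mul_self, Complex.normSq_eq_norm_sq, hβ]; norm_num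
  have hnum : (r : ℂ) * α - r * β = r * α * (1 - β / α) := by field_simp
  have hden : 1 - conj ((r : ℂ) * β) * (r * α) = -(conj β * α) * ((r : ℂ) ^ 2 - β / α) := by
    rw [map_mul, Complex.conj_ofReal]
    field_simp
    linear_combination -hββ
  rw [pRho, norm_div, hnum, hden]
  simp [hα, hβ, abs_of_nonneg hr, mul_div_assoc]

open Real in
lemma prod_erase_pRho_of_eq_mul_exp {N : ℕ} [NeZero N] {r : ℝ} (hr0 : 0 ≤ r) (hr1 : r < 1)
    {ω₀ : ℂ} (hω₀ : ‖ω₀‖ = 1) {ω : Fin N → ℂ}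
    (hω : ∀ j, ω j = ω₀ * Complex.exp (2 * π * Complex.I * (j : ℕ) / N)) (j : Fin N) :
    ∏ j₁ ∈ univ.erase j, pRho (r * ω j₁) (r * ω j)
      = N * r ^ (N - 1) * (1 - r ^ 2) / (1 - r ^ (2 * N)) := by
  have hN : 0 < N := Nat.pos_of_neZero N
  set μ := Complex.exp (2 * π * Complex.I / N)
  have hμ : IsPrimitiveRoot μ N := Complex.isPrimitiveRoot_exp N hN.ne'
  have hωμ : ∀ j : Fin N, ω j = ω₀ * μ ^ (j : ℕ) := fun j => by
    rw [hω, ← Complex.exp_nat_mul]; ring_nf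
  have hω1 : ∀ j, ‖ω j‖ = 1 := fun j => by
    rw [hωμ, norm_mul, norm_pow, hω₀, hμ.norm'_eq_one hN.ne', one_pow, one_mul]
  have hω₀0 : ω₀ ≠ 0 := norm_ne_zero_iff.1 (by rw [hω₀]; exact one_ne_zero)
  have hquot : ∀ j₁ : Fin N, ω j / ω j₁ = μ ^ (j : ℕ) / μ ^ (j₁ : ℕ) := fun j₁ => by
    rw [hωμ, hωμ, mul_div_mul_left _ _ hω₀0]
  have hr2 : r ^ 2 ≠ 1 := by nlinarith
  have hgeom : ∀ x : ℝ, 0 ≤ x → ‖∏ ξ ∈ (nthRootsFinset N (1 : ℂ)).erase 1, ((x : ℂ) - ξ)‖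
      = ∑ i ∈ range N, x ^ i := fun x hx => by
    rw [hμ.prod_erase_one_sub_eq_geom_sum hN]
    norm_cast
    exact Real.norm_of_nonneg (sum_nonneg fun i _ => pow_nonneg hx i)
  calc ∏ j₁ ∈ univ.erase j, pRho (r * ω j₁) (r * ω j)
      = ∏ ξ ∈ (nthRootsFinset N (1 : ℂ)).erase 1, r * ‖1 - ξ‖ / ‖(r : ℂ) ^ 2 - ξ‖ := by
        rw [← hμ.prod_erase_pow_div_pow]
        exact prod_congr rfl fun j₁ _ => by
          rw [pRho_ofReal_mul_of_norm_eq_one hr0 (hω1 _) (hω1 _), hquot]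
    _ = r ^ (N - 1) * ‖∏ ξ ∈ (nthRootsFinset N (1 : ℂ)).erase 1, ((1 : ℝ) - ξ : ℂ)‖
          / ‖∏ ξ ∈ (nthRootsFinset N (1 : ℂ)).erase 1, ((r ^ 2 : ℝ) - ξ : ℂ)‖ := by
        rw [prod_div_distrib, prod_mul_distrib, prod_const, norm_prod, norm_prod,
          card_erase_of_mem (one_mem_nthRootsFinset hN), hμ.card_nthRootsFinset]
        push_cast; rfl
    _ = N * r ^ (N - 1) * (1 - r ^ 2) / (1 - r ^ (2 * N)) := by
        have h2N : r ^ (2 * N) ≠ 1 := (pow_lt_one₀ hr0 hr1 (by omega)).ne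
        rw [hgeom 1 zero_le_one, hgeom _ (sq_nonneg r), geom_sum_eq hr2, one_geom_sum, ← pow_mul]
        field_simp [sub_ne_zero.2 h2N, sub_ne_zero.2 h2N.symm]
        ring

section InfiniteProducts

variable {ι κ : Type*}

lemma Real.multipliable_of_nonneg_of_le_one {f : ι → ℝ} (h0 : ∀ i, 0 ≤ f i) (h1 : ∀ i, f i ≤ 1) :
    Multipliable f :=
  ⟨_, tendsto_atTop_ciInf (prod_anti_set_of_le_one h0 h1)
    ⟨0, by rintro _ ⟨s, rfl⟩; exact prod_nonneg fun i _ => h0 i⟩⟩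

lemma hasProd_le_of_nonneg {f g : ι → ℝ} {a b : ℝ} (hfg : ∀ i, f i ≤ g i) (h0 : ∀ i, 0 ≤ f i)
    (hf : HasProd f a) (hg : HasProd g b) : a ≤ b :=
  le_of_tendsto_of_tendsto' hf hg fun _ => prod_le_prod (fun i _ => h0 i) fun i _ => hfg i

lemma HasProd.rpow_const {f : ι → ℝ} {a : ℝ} (hf : HasProd f a) (h0 : ∀ i, 0 ≤ f i)
    (ha : a ≠ 0) (c : ℝ) : HasProd (fun i => f i ^ c) (a ^ c) := by
  refine ((Real.continuousAt_rpow_const a c (Or.inl ha)).tendsto.comp hf).congr fun s => ?_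
  exact (Real.finsetProd_rpow s f (fun i _ => h0 i) c).symm

def subtypeNePairEquiv [DecidableEq ι] (m : ι) (j : κ) :
    {k // k ≠ j} ⊕ ({i // i ≠ m} × κ) ≃ {q : ι × κ // q ≠ (m, j)} where
  toFun := Sum.elim (fun k => ⟨(m, k), fun h => k.2 (congrArg Prod.snd h)⟩)
    fun p => ⟨(p.1, p.2), fun h => p.1.2 (congrArg Prod.fst h)⟩
  invFun q := if h : q.1.1 = m then .inl ⟨q.1.2, fun hk => q.2 (Prod.ext h hk)⟩
    else .inr (⟨q.1.1, h⟩, q.1.2)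
  left_inv := by
    rintro (k | ⟨⟨i, hi⟩, k⟩)
    · simp
    · simp [hi]
  right_inv := by
    rintro ⟨⟨i, k⟩, h⟩
    by_cases hi : i = m
    · subst hi; simp
    · simp [hi]

lemma tprod_subtype_ne_pair [Fintype κ] [DecidableEq κ] {f : ι × κ → ℝ} (h0 : ∀ q, 0 ≤ f q)
    (h1 : ∀ q, f q ≤ 1) (m : ι) (j : κ) :
    ∏' q : {q : ι × κ // q ≠ (m, j)}, f q
      = (∏ k ∈ univ.erase j, f (m, k)) * ∏' i : {i // i ≠ m}, ∏ k, f (i, k) := by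
  classical
  have hM : Multipliable fun p : {i // i ≠ m} × κ => f (p.1, p.2) :=
    Real.multipliable_of_nonneg_of_le_one (fun _ => h0 _) fun _ => h1 _
  rw [← (subtypeNePairEquiv m j).tprod_eq (fun q => f q),
    Multipliable.tprod_sum (Multipliable.of_finite) hM, tprod_fintype]
  simp only [subtypeNePairEquiv, Equiv.coe_fn_mk, Sum.elim_inl, Sum.elim_inr]
  rw [hM.tprod_prod' fun _ => Multipliable.of_finite,
    prod_subtype (univ.erase j) (p := (· ≠ j)) (F := inferInstance) (by simp) fun k => f (m, k)]
  simp only [tprod_fintype]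

lemma rpow_tprod_le_tprod_prod_and_le [Fintype κ] {f : ι → ℝ} {g : ι → κ → ℝ} {a b : ℝ}
    (hf0 : ∀ i, 0 ≤ f i) (hf1 : ∀ i, f i ≤ 1) (hpos : 0 < ∏' i, f i) (hg1 : ∀ i k, g i k ≤ 1)
    (hfg : ∀ i k, f i ^ a ≤ g i k ∧ g i k ≤ f i ^ b) :
    (∏' i, f i) ^ (a * Fintype.card κ) ≤ ∏' i, ∏ k, g i k ∧
      ∏' i, ∏ k, g i k ≤ (∏' i, f i) ^ (b * Fintype.card κ) := by
  have hg0 : ∀ i k, 0 ≤ g i k := fun i k => (Real.rpow_nonneg (hf0 i) a).trans (hfg i k).1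
  have hG : HasProd (fun i => ∏ k, g i k) (∏' i, ∏ k, g i k) :=
    (Real.multipliable_of_nonneg_of_le_one (fun i => prod_nonneg fun k _ => hg0 i k)
      fun i => prod_le_one (fun k _ => hg0 i k) fun k _ => hg1 i k).hasProd
  have hF : ∀ c : ℝ,
      HasProd (fun i => f i ^ (c * Fintype.card κ)) ((∏' i, f i) ^ (c * Fintype.card κ)) :=
    fun c => (Real.multipliable_of_nonneg_of_le_one hf0 hf1).hasProd.rpow_const hf0 hpos.ne'
      (c * Fintype.card κ)
  have hpow : ∀ (c : ℝ) i, f i ^ (c * Fintype.card κ) = ∏ _k : κ, f i ^ c := fun c i => by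
    rw [prod_const, card_univ, Real.rpow_mul (hf0 i), Real.rpow_natCast]
  constructor
  · refine hasProd_le_of_nonneg (fun i => ?_) (fun i => Real.rpow_nonneg (hf0 i) _) (hF a) hG
    rw [hpow]
    exact prod_le_prod (fun k _ => Real.rpow_nonneg (hf0 i) _) fun k _ => (hfg i k).1
  · refine hasProd_le_of_nonneg (fun i => ?_) (fun i => prod_nonneg fun k _ => hg0 i k) hG (hF b)
    rw [hpow]
    exact prod_le_prod (fun k _ => hg0 i k) fun k _ => (hfg i k).2

lemma Real.le_ciInf_rpow [Nonempty ι] {p : ι → ℝ} {x c : ℝ} (hp : ∀ i, 0 ≤ p i)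
    (hpos : 0 < ⨅ i, p i) (hx : 0 ≤ x) (h : ∀ i, x ≤ p i ^ c) : x ≤ (⨅ i, p i) ^ c := by
  obtain hc | hc := le_or_gt c 0
  · obtain ⟨i⟩ := ‹Nonempty ι›
    exact (h i).trans (Real.rpow_le_rpow_of_nonpos hpos (ciInf_le ⟨0, by
      rintro _ ⟨k, rfl⟩; exact hp k⟩ i) hc)
  · rw [← Real.rpow_inv_le_iff_of_pos hx (Real.iInf_nonneg hp) hc]
    exact le_ciInf fun i => (Real.rpow_inv_le_iff_of_pos hx (hp i) hc).2 (h i)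

end InfiniteProducts

noncomputable def charSeqAt {ι : Type*} (z : ι → ℂ) (k : ι) : ℝ :=
  ∏' j : {j : ι // j ≠ k}, pRho (z j) (z k)

section CharSeq

variable {ι κ : Type*}

lemma charSeqAt_nonneg (z : ι → ℂ) (k : ι) : 0 ≤ charSeqAt z k :=
  tprod_nonneg fun _ => pRho_nonneg _ _

lemma charSeq_le_charSeqAt (z : ι → ℂ) (k : ι) : charSeq z ≤ charSeqAt z k :=
  ciInf_le ⟨0, by rintro _ ⟨i, rfl⟩; exact charSeqAt_nonneg z i⟩ k

lemma charSeqAt_bounds_of_clusters [Fintype κ] [DecidableEq κ] {z : ι → ℂ} {w : ι × κ → ℂ}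
    (hz : ∀ i, ‖z i‖ ≤ 1) (hw : ∀ q, ‖w q‖ ≤ 1) {C a b : ℝ} (hC : 0 ≤ C)
    (hintra : ∀ m j, ∏ j₁ ∈ univ.erase j, pRho (w (m, j₁)) (w (m, j)) = C)
    (hinter : ∀ m m₁, m₁ ≠ m → ∀ j j₁,
      pRho (z m₁) (z m) ^ a ≤ pRho (w (m₁, j₁)) (w (m, j)) ∧
        pRho (w (m₁, j₁)) (w (m, j)) ≤ pRho (z m₁) (z m) ^ b)
    {m : ι} (hm : 0 < charSeqAt z m) (j : κ) :
    C * charSeqAt z m ^ (a * Fintype.card κ) ≤ charSeqAt w (m, j) ∧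
      charSeqAt w (m, j) ≤ C * charSeqAt z m ^ (b * Fintype.card κ) := by
  obtain ⟨hlo, hhi⟩ := rpow_tprod_le_tprod_prod_and_le (fun _ => pRho_nonneg _ _)
    (fun i => pRho_le_one (hz _) (hz _)) hm (fun _ _ => pRho_le_one (hw _) (hw _))
    fun (i : {i // i ≠ m}) k => hinter m i i.2 j k
  have hsplit : charSeqAt w (m, j) = C * ∏' i : {i // i ≠ m}, ∏ k, pRho (w (i, k)) (w (m, j)) := by
    rw [charSeqAt, tprod_subtype_ne_pair (f := fun q => pRho (w q) (w (m, j)))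
      (fun _ => pRho_nonneg _ _) (fun _ => pRho_le_one (hw _) (hw _)), hintra]
  rw [hsplit]
  exact ⟨mul_le_mul_of_nonneg_left hlo hC, mul_le_mul_of_nonneg_left hhi hC⟩

lemma charSeq_bounds_of_charSeqAt_bounds [Nonempty ι] [Nonempty κ] {z : ι → ℂ} {w : ι × κ → ℂ}
    (hδ : 0 < charSeq z) {C a b : ℝ} (hC : 0 < C) (ha : 0 ≤ a)
    (h : ∀ m j, C * charSeqAt z m ^ a ≤ charSeqAt w (m, j) ∧
      charSeqAt w (m, j) ≤ C * charSeqAt z m ^ b) :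
    C * charSeq z ^ a ≤ charSeq w ∧ charSeq w ≤ C * charSeq z ^ b := by
  obtain ⟨j⟩ := ‹Nonempty κ›
  refine ⟨le_ciInf fun ⟨m, j⟩ => le_trans ?_ (h m j).1, ?_⟩
  · exact mul_le_mul_of_nonneg_left
      (Real.rpow_le_rpow hδ.le (charSeq_le_charSeqAt z m) ha) hC.le
  · rw [← div_le_iff₀' hC]
    refine Real.le_ciInf_rpow (charSeqAt_nonneg z) hδ
      (div_nonneg (Real.iInf_nonneg (charSeqAt_nonneg w)) hC.le) fun m => ?_
    rw [div_le_iff₀' hC]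
    exact (charSeq_le_charSeqAt w (m, j)).trans (h m j).2

end CharSeq

theorem charSeq_enrichment_sandwich_general
    (ζ : ℕ → ℂ) (hζ : ∀ m, ζ m ∈ ball (0 : ℂ) 1)
    (ε : ℝ) (hε : ε ∈ Set.Ioo (0:ℝ) 1)
    (hδ : 0 < charSeq ζ)
    (r : ℝ) (hr : r = ε / 4) (N : ℕ) (hN : 1 ≤ N)
    (ω : ℕ → Fin N → ℂ) (hωabs : ∀ m j, ‖ω m j‖ = 1)
    (hωsp : ∀ m j, ω m j = ω m ⟨0, hN⟩ * Complex.exp (2 * Real.pi * Complex.I * (j : ℕ) / N))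
    (ζ' : ℕ × Fin N → ℂ)
    (hζ' : ∀ m j, ζ' (m, j) =
      ((r : ℂ) * ω m j + ζ m) / (1 + (starRingEnd ℂ) (ζ m) * ((r : ℂ) * ω m j)))
    (a b : ℝ) (ha : 1 ≤ a)
    (hbound : ∀ m m₁ : ℕ, m ≠ m₁ → ∀ j j₁ : Fin N,
      pRho (ζ m₁) (ζ m) ^ a ≤ pRho (ζ' (m, j)) (ζ' (m₁, j₁)) ∧
      pRho (ζ' (m, j)) (ζ' (m₁, j₁)) ≤ pRho (ζ m₁) (ζ m) ^ b) :
    charSeq ζ ^ (a * N) * (N * r ^ (N - 1) * (1 - r ^ 2) / (1 - r ^ (2 * N)))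
        ≤ charSeq ζ' ∧
    charSeq ζ' ≤
      charSeq ζ ^ (b * N) * (N * r ^ (N - 1) * (1 - r ^ 2) / (1 - r ^ (2 * N))) := by
  obtain ⟨hε0, hε1⟩ := hε
  have hr0 : 0 < r := by linarith
  have hr1 : r < 1 := by linarith
  have : NeZero N := ⟨by omega⟩
  have hζ1 : ∀ m, ‖ζ m‖ < 1 := by simpa using hζ
  have hrω : ∀ m j, ‖(r : ℂ) * ω m j‖ ≤ 1 := fun m j => by
    rw [norm_mul, hωabs, Complex.norm_real, Real.norm_of_nonneg hr0.le, mul_one]; exact hr1.le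
  have hζ'1 : ∀ q, ‖ζ' q‖ ≤ 1 := fun ⟨m, j⟩ => hζ' m j ▸ norm_moebius_le_one (hζ1 m) (hrω m j)
  have hintra : ∀ m j, ∏ j₁ ∈ univ.erase j, pRho (ζ' (m, j₁)) (ζ' (m, j))
      = N * r ^ (N - 1) * (1 - r ^ 2) / (1 - r ^ (2 * N)) := fun m j => by
    simp_rw [hζ', pRho_moebius (hζ1 m) (hrω m _) (hrω m _)]
    exact prod_erase_pRho_of_eq_mul_exp hr0.le hr1 (hωabs m _) (hωsp m) j
  have hC : 0 < (N : ℝ) * r ^ (N - 1) * (1 - r ^ 2) / (1 - r ^ (2 * N)) := by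
    have h2N : r ^ (2 * N) < 1 := pow_lt_one₀ hr0.le hr1 (by omega)
    have : 0 < (N : ℝ) := by exact_mod_cast hN
    exact div_pos (mul_pos (mul_pos this (pow_pos hr0 _)) (by nlinarith)) (by linarith)
  have hbounds := charSeq_bounds_of_charSeqAt_bounds (a := a * N) (b := b * N) hδ hC
    (mul_nonneg (by linarith) N.cast_nonneg) fun m j => by
      simpa only [Fintype.card_fin] using charSeqAt_bounds_of_clusters (a := a) (b := b)
        (fun m => (hζ1 m).le) hζ'1 hC.le hintra
        (fun m m₁ h j j₁ => by rw [pRho_symm (ζ' (m₁, j₁))]; exact hbound m m₁ h.symm j j₁)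
        (hδ.trans_le (charSeq_le_charSeqAt ζ m)) j
  rwa [mul_comm _ (charSeq ζ ^ _), mul_comm _ (charSeq ζ ^ _)] at hbounds

/-- If `a ≥ 1` and `b ≤ 1` satisfy
`ρ(z_{m₁},z_m)^a ≤ ρ(z_{m,j}, z_{m₁,j₁}) ≤ ρ(z_{m₁},z_m)^b` for all `m ≠ m₁` and all
`j, j₁`, then `(δ(ζ))^{aN}·N r^{N−1}(1−r²)/(1−r^{2N}) ≤ δ(ζ') ≤ (δ(ζ))^{bN}·N r^{N−1}(1−r²)/(1−r^{2N})`. -/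
theorem charSeq_enrichment_sandwich
    (ζ : ℕ → ℂ) (hζ : ∀ m, ζ m ∈ ball (0 : ℂ) 1)
    (ε : ℝ) (hε : ε ∈ Set.Ioo (0:ℝ) 1)
    (hsep : ∀ i j : ℕ, i ≠ j → ε ≤ pRho (ζ i) (ζ j))
    (hδ : 0 < charSeq ζ)
    (r : ℝ) (hr : r = ε / 4) (N : ℕ) (hN : 1 ≤ N)
    (ω : ℕ → Fin N → ℂ) (hωabs : ∀ m j, ‖ω m j‖ = 1)
    (hωsp : ∀ m j, ω m j = ω m ⟨0, hN⟩ * Complex.exp (2 * Real.pi * Complex.I * (j : ℕ) / N))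
    (ζ' : ℕ × Fin N → ℂ)
    (hζ' : ∀ m j, ζ' (m, j) =
      ((r : ℂ) * ω m j + ζ m) / (1 + (starRingEnd ℂ) (ζ m) * ((r : ℂ) * ω m j)))
    (a b : ℝ) (ha : 1 ≤ a) (hb : b ≤ 1)
    (hbound : ∀ m m₁ : ℕ, m ≠ m₁ → ∀ j j₁ : Fin N,
      pRho (ζ m₁) (ζ m) ^ a ≤ pRho (ζ' (m, j)) (ζ' (m₁, j₁)) ∧
      pRho (ζ' (m, j)) (ζ' (m₁, j₁)) ≤ pRho (ζ m₁) (ζ m) ^ b) :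
    charSeq ζ ^ (a * N) * (N * r ^ (N - 1) * (1 - r ^ 2) / (1 - r ^ (2 * N)))
        ≤ charSeq ζ' ∧
    charSeq ζ' ≤
      charSeq ζ ^ (b * N) * (N * r ^ (N - 1) * (1 - r ^ 2) / (1 - r ^ (2 * N))) :=
  charSeq_enrichment_sandwich_general ζ hζ ε hε hδ r hr N hN ω hωabs hωsp ζ' hζ' a b ha hbound
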